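/- Let A be a commutative ℚ-algebra and x₁,…,x_d ∈ A with x_i² = 0 for all i and x₁⋯x_d = 0. If additionally the d products γ_i = ∏_{j≠i} x_j are ℚ-linearly independent in A, then the ℚ-subalgebra generated by x₁,…,x_d is isomorphic as a ℚ-algebra to ℚ[z₁,…,z_d]/(z₁²,…,z_d², z₁⋯z_d). -/

import Mathlib

/-!
Modulo the ideal `(z_i², z₁⋯z_d)` every polynomial is a combination of the squarefree monomials
`z_S = ∏_{i ∈ S} z_i` with `S` a proper subset, so it suffices that the corresponding products
`x_S` are linearly independent. Given `∑ c_S x_S = 0`, argue by induction on `|S|`: for `i ∉ S`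
and `U = S ∪ {i}`, multiplying the relation by `x_{Uᶜ}` leaves `∑_{j ∈ U} c_{U∖{j}} γ_j = 0`,
so `c_S = 0` is the coefficient of `γ_i`.
-/

open MvPolynomial Finset

theorem Finset.prod_mul_prod_eq_zero_of_sq_eq_zero {σ M : Type*} [CommMonoidWithZero M]
    {x : σ → M} (hsq : ∀ i, x i ^ 2 = 0) {S T : Finset σ} (h : ¬Disjoint S T) :
    (∏ i ∈ S, x i) * ∏ i ∈ T, x i = 0 := by
  classical
  obtain ⟨j, hjS, hjT⟩ := not_disjoint_iff.1 h
  rw [← mul_prod_erase _ _ hjS, ← mul_prod_erase _ _ hjT, mul_mul_mul_comm, ← sq, hsq, zero_mul]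

theorem Finset.prod_erase_mul_prod_compl {σ M : Type*} [Fintype σ] [DecidableEq σ]
    [CommMonoid M] (x : σ → M) {U : Finset σ} {j : σ} (hj : j ∈ U) :
    (∏ i ∈ U.erase j, x i) * ∏ i ∈ Uᶜ, x i = ∏ i ∈ univ.erase j, x i := by
  rw [← prod_union (disjoint_compl_right.mono_left (erase_subset j U)), ← union_compl U,
    erase_union_distrib, erase_eq_of_notMem (notMem_compl.2 hj)]

section Reduction

variable {R σ : Type*} [CommSemiring R] [Fintype σ]

variable (R σ) in
noncomputable def relationIdeal : Ideal (MvPolynomial σ R) :=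
  Ideal.span (Set.range (fun i => (X i : MvPolynomial σ R) ^ 2) ∪ {∏ i, X i})

variable (R σ) in
noncomputable def properSquarefreeSpan : Submodule R (MvPolynomial σ R) :=
  Submodule.span R ((fun S => ∏ i ∈ S, X i) '' {S | S ≠ univ})

theorem X_sq_mem_relationIdeal (i : σ) : (X i : MvPolynomial σ R) ^ 2 ∈ relationIdeal R σ :=
  Ideal.subset_span (Or.inl ⟨i, rfl⟩)

theorem prod_X_mem_relationIdeal : ∏ i, (X i : MvPolynomial σ R) ∈ relationIdeal R σ :=
  Ideal.subset_span (Or.inr rfl)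

theorem relationIdeal_le_ker {A : Type*} [CommSemiring A] [Algebra R A] {x : σ → A}
    (hsq : ∀ i, x i ^ 2 = 0) (htop : ∏ i, x i = 0) :
    relationIdeal R σ ≤ RingHom.ker (aeval x).toRingHom := by
  refine Ideal.span_le.2 ?_
  rintro _ (⟨i, rfl⟩ | rfl) <;> simp [hsq, htop]

theorem monomial_mem_relationIdeal_sup_properSquarefreeSpan (e : σ →₀ ℕ) (a : R) :
    monomial e a ∈ (relationIdeal R σ).restrictScalars R ⊔ properSquarefreeSpan R σ := by
  by_cases h2 : ∃ i, 2 ≤ e i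
  · obtain ⟨i, hi⟩ := h2
    refine Submodule.mem_sup_left (Ideal.mem_of_dvd _ ?_ (X_sq_mem_relationIdeal i))
    rw [X_pow_eq_monomial, monomial_dvd_monomial]
    exact ⟨Or.inr (Finsupp.single_le_iff.2 hi), one_dvd a⟩
  by_cases h1 : ∀ i, e i ≠ 0
  · refine Submodule.mem_sup_left (Ideal.mem_of_dvd _ ?_ prod_X_mem_relationIdeal)
    rw [monomial_eq, Finsupp.prod_fintype _ _ fun i => pow_zero _]
    exact Dvd.dvd.mul_left (prod_dvd_prod_of_dvd _ _ fun i _ => dvd_pow_self _ (h1 i)) _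
  push Not at h1 h2
  refine Submodule.mem_sup_right ?_
  have hsupp : e.support ≠ univ := by simpa [eq_univ_iff_forall] using h1
  have : monomial e a = a • ∏ i ∈ e.support, (X i : MvPolynomial σ R) := by
    rw [monomial_eq, C_mul', Finsupp.prod]
    congr 1
    refine prod_congr rfl fun i hi => ?_
    rw [show e i = 1 by have := Finsupp.mem_support_iff.1 hi; have := h2 i; omega, pow_one]
  rw [this]
  exact Submodule.smul_mem _ _ (Submodule.subset_span ⟨_, hsupp, rfl⟩)

theorem relationIdeal_sup_properSquarefreeSpan_eq_top :
    (relationIdeal R σ).restrictScalars R ⊔ properSquarefreeSpan R σ = ⊤ := by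
  refine Submodule.eq_top_iff'.2 fun p => ?_
  induction p using MvPolynomial.induction_on' with
  | monomial e a => exact monomial_mem_relationIdeal_sup_properSquarefreeSpan e a
  | add p q hp hq => exact add_mem hp hq

end Reduction

section LinearIndependence

variable {σ R A : Type*} [Fintype σ] [DecidableEq σ] [CommRing R] [CommRing A] [Algebra R A]
  {x : σ → A}

/- Only the terms `T = U.erase j` survive: a `T ⊄ U` meets `Uᶜ`, `T = U` gives `∏ i, x i = 0`,
and a smaller `T` has `c T = 0`. -/
theorem sum_smul_prod_mul_prod_compl (hsq : ∀ i, x i ^ 2 = 0) (htop : ∏ i, x i = 0)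
    {c : Finset σ → R} {U : Finset σ} (hc : ∀ T : Finset σ, #T + 1 < #U → c T = 0) :
    (∑ T, c T • ∏ i ∈ T, x i) * ∏ i ∈ Uᶜ, x i =
      ∑ j ∈ U, c (U.erase j) • ∏ i ∈ univ.erase j, x i := by
  have hvanish : ∀ T ∉ U.image U.erase, c T • ((∏ i ∈ T, x i) * ∏ i ∈ Uᶜ, x i) = 0 := by
    intro T hT
    by_cases hTU : T ⊆ U
    · rcases hTU.eq_or_ssubset with rfl | hlt
      · rw [prod_mul_prod_compl, htop, smul_zero]
      · have hcard : #T + 1 ≠ #U := fun h => by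
          obtain ⟨a, ha, rfl⟩ := exists_eq_insert_iff.2 ⟨hTU, h⟩
          exact hT (mem_image.2 ⟨a, mem_insert_self a T, erase_insert ha⟩)
        have := card_lt_card hlt
        rw [hc T (by omega), zero_smul]
    · rw [prod_mul_prod_eq_zero_of_sq_eq_zero hsq (by rwa [disjoint_compl_right_iff]), smul_zero]
  calc (∑ T, c T • ∏ i ∈ T, x i) * ∏ i ∈ Uᶜ, x i
      = ∑ T ∈ U.image U.erase, c T • ((∏ i ∈ T, x i) * ∏ i ∈ Uᶜ, x i) := by
        simp_rw [sum_mul, smul_mul_assoc]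
        exact (sum_subset (subset_univ _) fun T _ hT => hvanish T hT).symm
    _ = ∑ j ∈ U, c (U.erase j) • ∏ i ∈ univ.erase j, x i := by
        rw [sum_image (erase_injOn U)]
        exact sum_congr rfl fun j hj => by rw [prod_erase_mul_prod_compl x hj]

theorem linearIndepOn_prod_of_sq_eq_zero (hsq : ∀ i, x i ^ 2 = 0) (htop : ∏ i, x i = 0)
    (hind : LinearIndependent R fun j => ∏ i ∈ univ.erase j, x i) :
    LinearIndepOn R (fun S => ∏ i ∈ S, x i) {S | S ≠ univ} := by
  rw [linearIndepOn_iff]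
  intro c hcu hc
  replace hcu : c univ = 0 := Finsupp.notMem_support_iff.1 fun h => hcu h rfl
  rw [Finsupp.linearCombination_apply, Finsupp.sum_fintype _ _ (by simp)] at hc
  ext S
  induction hn : #S using Nat.strong_induction_on generalizing S with | _ n IH
  obtain rfl | hS := eq_or_ne S univ
  · exact hcu
  obtain ⟨j, hj⟩ : ∃ j, j ∉ S := by simpa [eq_univ_iff_forall] using hS
  have hγ := sum_smul_prod_mul_prod_compl hsq htop (U := insert j S)
    fun T hT => IH #T (by rw [card_insert_of_notMem hj] at hT; omega) T rfl
  rw [hc, zero_mul] at hγ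
  simpa [erase_insert hj] using linearIndependent_iff'.1 hind _ _ hγ.symm j (mem_insert_self j S)

theorem disjoint_properSquarefreeSpan_ker_aeval (hsq : ∀ i, x i ^ 2 = 0) (htop : ∏ i, x i = 0)
    (hind : LinearIndependent R fun j => ∏ i ∈ univ.erase j, x i) :
    Disjoint (properSquarefreeSpan R σ) (LinearMap.ker (aeval x).toLinearMap) := by
  rw [properSquarefreeSpan, Set.image_eq_range]
  refine Submodule.range_ker_disjoint ?_
  have : (aeval x).toLinearMap ∘
      (fun S : {S : Finset σ | S ≠ univ} => ∏ i ∈ S.1, (X i : MvPolynomial σ R)) =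
        fun S => ∏ i ∈ S.1, x i := by
    ext S
    simp
  rw [this]
  exact linearIndepOn_prod_of_sq_eq_zero hsq htop hind

end LinearIndependence

theorem subalgebra_iso_of_relations_general (d : ℕ)
    (A : Type*) [CommRing A] [Algebra ℚ A] (x : Fin d → A)
    (hsq : ∀ i, x i ^ 2 = 0) (htop : ∏ i : Fin d, x i = 0)
    (hind : LinearIndependent ℚ (fun i : Fin d => ∏ j ∈ Finset.univ.erase i, x j)) :
    RingHom.ker (aeval (R := ℚ) x).toRingHom =
      Ideal.span
        ((Set.range fun i : Fin d => (X i : MvPolynomial (Fin d) ℚ) ^ 2) ∪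
          {∏ i : Fin d, (X i : MvPolynomial (Fin d) ℚ)}) := by
  change _ = relationIdeal ℚ (Fin d)
  apply Submodule.restrictScalars_injective ℚ
  -- `relationIdeal ≤ ker` together with a common complement forces equality (modular law).
  refine (eq_of_le_of_inf_le_of_sup_le (z := properSquarefreeSpan ℚ (Fin d))
    (Submodule.restrictScalars_mono ℚ (relationIdeal_le_ker hsq htop)) ?_ ?_).symm
  · exact (disjoint_properSquarefreeSpan_ker_aeval hsq htop hind).symm.le_bot.trans bot_le
  · exact le_top.trans_eq relationIdeal_sup_properSquarefreeSpan_eq_top.symm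

/-- Let A be a commutative ℚ-algebra and x₁,…,x_d ∈ A with x_i² = 0, x₁⋯x_d = 0, and
the γ_i = ∏_{j≠i} x_j linearly independent over ℚ.  Then the kernel of the evaluation
map ℚ[z₁,…,z_d] → A, z_i ↦ x_i, is exactly (z₁²,…,z_d², z₁⋯z_d); hence the natural
surjection ℚ[z₁,…,z_d]/(z₁²,…,z_d², z₁⋯z_d) → ℚ[x₁,…,x_d] ⊆ A is an isomorphism. -/
theorem subalgebra_iso_of_relations (d : ℕ) (hd : 1 ≤ d)
    (A : Type*) [CommRing A] [Algebra ℚ A] (x : Fin d → A)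
    (hsq : ∀ i, x i ^ 2 = 0) (htop : ∏ i : Fin d, x i = 0)
    (hind : LinearIndependent ℚ (fun i : Fin d => ∏ j ∈ Finset.univ.erase i, x j)) :
    RingHom.ker (aeval (R := ℚ) x).toRingHom =
      Ideal.span
        ((Set.range fun i : Fin d => (X i : MvPolynomial (Fin d) ℚ) ^ 2) ∪
          {∏ i : Fin d, (X i : MvPolynomial (Fin d) ℚ)}) :=
  subalgebra_iso_of_relations_general d A x hsq htop hind
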